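/- arXiv:1509.06474 — 5 statements merged into one kernel-verified Lean document; each statement's English description precedes it below -/
import Mathlib

section
/- Let U be a nonprincipal ultrafilter on a countably infinite set I and let *ℤ = ∏_U ℤ. Then the ideal J = ⋂_{i∈ℕ} 2^i·*ℤ of *ℤ is not finitely generated; in particular *ℤ is not Noetherian. -/
/-!
In a domain, `J = ⋂ₙ (xⁿ)` satisfies `J ⊆ x • J` because `x` can be cancelled. If `J` were
finitely generated, Nakayama's lemma would give `r ≡ 1 mod x` with `r • J = 0`, so either `J = 0`
or `x` is a unit. The ultrapower `*ℤ` is a domain, `2` is not a unit in it, and for an injection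
`f : I → ℕ` the class of `j ↦ 2 ^ f j` is a nonzero element of `J`: as `U` is nonprincipal,
`f` tends to infinity along `U`.
-/

open Filter

namespace Ideal

variable {R : Type*} [CommRing R] [IsDomain R]

theorem iInf_span_singleton_pow_le_smul {x : R} (hx : x ≠ 0) :
    ⨅ n : ℕ, span {x ^ n} ≤ span {x} • ⨅ n : ℕ, span ({x ^ n} : Set R) := by
  intro y hy
  have hy' : ∀ n, y ∈ span {x ^ n} := (Submodule.mem_iInf _).1 hy
  obtain ⟨z, rfl⟩ := mem_span_singleton.1 (pow_one x ▸ hy' 1)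
  have hz : z ∈ ⨅ n : ℕ, span ({x ^ n} : Set R) := by
    refine (Submodule.mem_iInf _).2 fun n => ?_
    obtain ⟨w, hw⟩ := mem_span_singleton.1 (hy' (n + 1))
    exact mem_span_singleton.2 ⟨w, mul_left_cancel₀ hx (by rw [hw]; ring)⟩
  exact Submodule.smul_mem_smul (mem_span_singleton_self x) hz

theorem not_fg_iInf_span_singleton_pow {x : R} (hx : ¬IsUnit x)
    (hne : ⨅ n : ℕ, span ({x ^ n} : Set R) ≠ ⊥) : ¬(⨅ n : ℕ, span ({x ^ n} : Set R)).FG := by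
  intro hfg
  have hx0 : x ≠ 0 := by
    rintro rfl
    exact hne (eq_bot_iff.2 (iInf_le_of_le 1 (by simp)))
  obtain ⟨r, hr1, hr⟩ := Submodule.exists_sub_one_mem_and_smul_eq_zero_of_fg_of_le_smul _ _ hfg
    (iInf_span_singleton_pow_le_smul hx0)
  obtain ⟨a, ha, ha0⟩ := Submodule.exists_mem_ne_zero_of_ne_bot hne
  obtain rfl : r = 0 := (mul_eq_zero.1 (hr a ha)).resolve_right ha0
  rw [zero_sub, neg_mem_iff, mem_span_singleton, ← isUnit_iff_dvd_one] at hr1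
  exact hx hr1

end Ideal

namespace Filter.Germ

variable {α M : Type*}

instance noZeroDivisors {U : Ultrafilter α} [MulZeroClass M] [NoZeroDivisors M] :
    NoZeroDivisors ((U : Filter α).Germ M) where
  eq_zero_or_eq_zero_of_mul_eq_zero {x y} := inductionOn₂ x y fun _ _ h =>
    (Ultrafilter.eventually_or.1 ((coe_eq.1 h).mono fun _ => mul_eq_zero.1)).imp coe_eq.2 coe_eq.2

theorem isUnit_const_iff {l : Filter α} [l.NeBot] [CommMonoid M] {c : M} :
    IsUnit (c : l.Germ M) ↔ IsUnit c := by
  constructor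
  · intro h
    obtain ⟨v, hv⟩ := isUnit_iff_exists_inv.1 h
    induction v using Germ.inductionOn with
    | h g =>
      obtain ⟨j, hj⟩ := (coe_eq.1 hv).exists
      exact .of_mul_eq_one _ hj
  · rintro ⟨u, rfl⟩
    exact ⟨⟨u, ↑u⁻¹, congrArg ((↑) : M → l.Germ M) u.mul_inv,
      congrArg ((↑) : M → l.Germ M) u.inv_mul⟩, rfl⟩

theorem coe_pow_mem_iInf_span_pow [CommSemiring M] {l : Filter α} {f : α → ℕ}
    (hf : Tendsto f l atTop) (c : M) :
    (↑(fun j => c ^ f j) : l.Germ M) ∈ ⨅ n : ℕ, Ideal.span {(c : l.Germ M) ^ n} := by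
  refine (Submodule.mem_iInf _).2 fun n =>
    Ideal.mem_span_singleton'.2 ⟨↑(fun j => c ^ (f j - n)), ?_⟩
  rw [← const_pow]
  refine coe_eq.2 ((hf.eventually_ge_atTop n).mono fun j hj => ?_)
  simp [← pow_add, Nat.sub_add_cancel hj]

end Filter.Germ

theorem ultrapower_int_not_noetherian_general {I : Type*} [Countable I]
    (U : Ultrafilter I) (hU : ∀ i : I, U ≠ pure i) :
    ¬ (⨅ i : ℕ, Ideal.span {(((2 ^ i : ℤ) : ℤ) : (↑U : Filter I).Germ ℤ)}).FG ∧
      ¬ IsNoetherianRing ((↑U : Filter I).Germ ℤ) := by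
  have hcof : (U : Filter I) ≤ cofinite :=
    U.le_cofinite_or_eq_pure.resolve_right fun ⟨i, hi⟩ => hU i hi
  obtain ⟨f, hf⟩ := exists_injective_nat I
  have hlim : Tendsto f U atTop := Nat.cofinite_eq_atTop ▸ hf.tendsto_cofinite.mono_left hcof
  have hJ : ¬(⨅ i : ℕ, Ideal.span {(((2 ^ i : ℤ) : ℤ) : (↑U : Filter I).Germ ℤ)}).FG := by
    push_cast
    refine Ideal.not_fg_iInf_span_singleton_pow ?_
      (Submodule.ne_bot_iff _ |>.2 ⟨_, Germ.coe_pow_mem_iInf_span_pow hlim 2, ?_⟩)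
    · exact fun h => by simpa [Int.isUnit_iff] using Germ.isUnit_const_iff.1 h
    · exact fun h => (Germ.coe_eq.1 h).exists.elim fun j hj => pow_ne_zero _ two_ne_zero hj
  exact ⟨hJ, fun h => hJ ((isNoetherianRing_iff_ideal_fg _).1 h _)⟩

/-- Let `U` be a nonprincipal ultrafilter on a countably infinite set `I` and
`*ℤ = ∏_U ℤ`. The ideal `J = ⋂_{i ∈ ℕ} 2^i·*ℤ` is not finitely generated; in particular
`*ℤ` is not Noetherian. -/
theorem ultrapower_int_not_noetherian {I : Type*} [Countable I] [Infinite I]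
    (U : Ultrafilter I) (hU : ∀ i : I, U ≠ pure i) :
    ¬ (⨅ i : ℕ, Ideal.span {(((2 ^ i : ℤ) : ℤ) : (↑U : Filter I).Germ ℤ)}).FG ∧
      ¬ IsNoetherianRing ((↑U : Filter I).Germ ℤ) :=
  ultrapower_int_not_noetherian_general U hU
end

section
/- Let U be an ultrafilter on I, *ℚ = ∏_U ℚ. Two nonzero elements a, b ∈ *ℚ are equal if and only if they have the same sign (a·b > 0) and v_p(a) = v_p(b) for every prime p of *ℤ = ∏_U ℤ, where v_p is the valuation on *ℚ extended from *ℤ by v_p(x/y) = v_p(x) − v_p(y). -/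
/-!
A nonzero rational is determined by its sign and its `p`-adic valuations, since `q / r`
is then a positive rational all of whose valuations vanish. If `a ≠ b` in `*ℚ` while
`a * b > 0`, choosing for each index `i` a prime `p_i` at which `a_i` and `b_i` have
different valuations gives a prime `(p_i)` of `*ℤ` with `v_p(a) ≠ v_p(b)`.
-/

open Filter

/-- The componentwise `p`-adic valuation on the ultrapower `*ℚ = ∏_U ℚ`, with values
in `*ℤ = ∏_U ℤ`: on representatives it sends `(p_i), (x_i)` to `(v_{p_i}(x_i))`. -/
noncomputable def nsValQ {I : Type*} {U : Ultrafilter I}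
    (p : (↑U : Filter I).Germ ℤ) (x : (↑U : Filter I).Germ ℚ) : (↑U : Filter I).Germ ℤ :=
  Filter.Germ.map₂ (fun (q : ℤ) (r : ℚ) => padicValRat q.natAbs r) p x

namespace Rat

lemma eq_one_of_forall_padicValRat_eq_zero {x : ℚ} (hx : 0 < x)
    (h : ∀ p : ℕ, p.Prime → padicValRat p x = 0) : x = 1 := by
  have hval : ∀ p : ℕ, p.Prime → padicValNat p x.num.natAbs = padicValNat p x.den := by
    intro p hp
    have := h p hp
    rw [padicValRat_def, padicValInt, sub_eq_zero] at this
    exact_mod_cast this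
  have hnum_den : x.num.natAbs = x.den :=
    (Nat.eq_iff_prime_padicValNat_eq _ _ (by simpa using hx.ne') x.den_nz).mpr hval
  have hnum : x.num = x.den := by
    rw [← hnum_den, Int.natAbs_of_nonneg (Rat.num_pos.mpr hx).le]
  rw [← Rat.num_div_den x, hnum]
  exact div_self (by exact_mod_cast x.den_nz)

lemma eq_of_forall_padicValRat_eq {q r : ℚ} (hqr : 0 < q * r)
    (h : ∀ p : ℕ, p.Prime → padicValRat p q = padicValRat p r) : q = r := by
  have hq : q ≠ 0 := left_ne_zero_of_mul hqr.ne'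
  have hr : r ≠ 0 := right_ne_zero_of_mul hqr.ne'
  have hdiv : 0 < q / r := by
    rcases mul_pos_iff.mp hqr with h | h
    · exact div_pos h.1 h.2
    · exact div_pos_of_neg_of_neg h.1 h.2
  have : q / r = 1 := eq_one_of_forall_padicValRat_eq_zero hdiv fun p hp => by
    have : Fact p.Prime := ⟨hp⟩
    rw [padicValRat.div hq hr, h p hp, sub_self]
  exact (div_eq_one_iff_eq hr).mp this

lemma exists_prime_padicValRat_ne {q r : ℚ} (hqr : 0 < q * r) (hne : q ≠ r) :
    ∃ p : ℕ, p.Prime ∧ padicValRat p q ≠ padicValRat p r := by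
  by_contra! h
  exact hne (eq_of_forall_padicValRat_eq hqr h)

end Rat

lemma exists_primes_separating_padicValRat {I : Type*} (f g : I → ℚ) :
    ∃ P : I → ℕ, (∀ i, (P i).Prime) ∧
      ∀ i, 0 < f i * g i → f i ≠ g i → padicValRat (P i) (f i) ≠ padicValRat (P i) (g i) := by
  have : ∀ i, ∃ p : ℕ, p.Prime ∧
      (0 < f i * g i → f i ≠ g i → padicValRat p (f i) ≠ padicValRat p (g i)) := by
    intro i
    by_cases hi : 0 < f i * g i ∧ f i ≠ g i
    · obtain ⟨p, hp, hne⟩ := Rat.exists_prime_padicValRat_ne hi.1 hi.2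
      exact ⟨p, hp, fun _ _ => hne⟩
    · exact ⟨2, Nat.prime_two, fun h₁ h₂ => absurd ⟨h₁, h₂⟩ hi⟩
  choose P hP using this
  exact ⟨P, fun i => (hP i).1, fun i => (hP i).2⟩

lemma nsValQ_coe {I : Type*} {U : Ultrafilter I} (p : I → ℤ) (f : I → ℚ) :
    nsValQ (p : (U : Filter I).Germ ℤ) (f : (U : Filter I).Germ ℚ) = ↑(fun i => padicValRat (p i).natAbs (f i)) :=
  rfl

theorem ultrapower_rat_factorization_general {I : Type*} (U : Ultrafilter I)
    (a b : (↑U : Filter I).Germ ℚ) (ha : a ≠ 0) :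
    a = b ↔
      (0 < a * b ∧ ∀ p : I → ℤ, {i : I | 0 < p i ∧ Prime (p i)} ∈ U →
        nsValQ (↑p) a = nsValQ (↑p) b) := by
  refine ⟨fun hab => hab ▸ ⟨mul_self_pos.mpr ha, fun _ _ => rfl⟩, fun ⟨hpos, hval⟩ => ?_⟩
  induction a using Germ.inductionOn with | h f =>
  induction b using Germ.inductionOn with | h g =>
  by_contra hne
  obtain ⟨P, hP, hsep⟩ := exists_primes_separating_padicValRat f g
  have hprime : {i | 0 < (P i : ℤ) ∧ Prime (P i : ℤ)} ∈ U :=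
    univ_mem' fun i => ⟨by exact_mod_cast (hP i).pos, Nat.prime_iff_prime_int.mp (hP i)⟩
  have heq := hval (fun i => P i) hprime
  simp only [nsValQ_coe, Int.natAbs_natCast, Germ.coe_eq] at heq
  have hpos' : ∀ᶠ i in (U : Filter I), 0 < f i * g i := Germ.coe_pos.mp hpos
  have hne' : ∀ᶠ i in (U : Filter I), f i ≠ g i :=
    Ultrafilter.eventually_not.mpr (mt Germ.coe_eq.mpr hne)
  obtain ⟨i, hi_pos, hi_ne, hi_eq⟩ := (hpos'.and (hne'.and heq)).exists
  exact hsep i hi_pos hi_ne hi_eq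

/-- Infinite factorization in `*ℚ = ∏_U ℚ`: two nonzero elements `a, b` of `*ℚ` are equal
if and only if they have the same sign (`a·b > 0`) and `v_p(a) = v_p(b)` for every prime
`p` of `*ℤ`, where `v_p` is the componentwise `p`-adic valuation on `*ℚ`. -/
theorem ultrapower_rat_factorization {I : Type*} (U : Ultrafilter I)
    (a b : (↑U : Filter I).Germ ℚ) (ha : a ≠ 0) (hb : b ≠ 0) :
    a = b ↔
      (0 < a * b ∧ ∀ p : I → ℤ, {i : I | 0 < p i ∧ Prime (p i)} ∈ U →
        nsValQ (↑p) a = nsValQ (↑p) b) :=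
  ultrapower_rat_factorization_general U a b ha
end

section
/- Let U be an ultrafilter on I, *ℤ = ∏_U ℤ ⊆ *ℚ = ∏_U ℚ. Then *ℤ = ⋂_p O_p, where p ranges over all primes of *ℤ and O_p = {x ∈ *ℚ : x = 0 or v_p(x) ≥ 0} is the valuation ring of the p-adic valuation v_p on *ℚ. -/
/-! An element of `*ℚ` lies in `*ℤ` iff its components have denominator `1` for `U`-almost all
indices. If not, the smallest prime factors of the denominators form a prime `p` of `*ℤ`, and
`v_p(x)` is componentwise negative, since `p` divides the denominator but not the numerator. -/

open Filter

theorem padicValRat_nonneg_of_den_eq_one {p : ℕ} {q : ℚ} (hq : q.den = 1) :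
    0 ≤ padicValRat p q := by
  rw [← Rat.coe_int_num_of_den_eq_one hq, padicValRat.of_int]
  exact Int.natCast_nonneg _

theorem padicValRat_neg_of_dvd_den {p : ℕ} [hp : Fact p.Prime] {q : ℚ} (hpq : p ∣ q.den) :
    padicValRat p q < 0 := by
  have hnum : padicValInt p q.num = 0 :=
    padicValInt.eq_zero_of_not_dvd fun hdvd => hp.out.one_lt.ne'
      (Nat.eq_one_of_dvd_coprimes q.reduced (Int.natCast_dvd.1 hdvd) hpq)
  have hden : 1 ≤ padicValNat p q.den := one_le_padicValNat_of_dvd q.den_ne_zero hpq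
  rw [padicValRat, hnum]
  omega

theorem Filter.Germ.exists_eq_coe_iff_eventually_den_eq_one {I : Type*} {l : Filter I}
    {f : l.Germ ℤ → l.Germ ℚ} (hf : ∀ z : I → ℤ, f ↑z = ↑(fun i => (z i : ℚ))) (x : I → ℚ) :
    (∃ z, f z = ↑x) ↔ ∀ᶠ i in l, (x i).den = 1 := by
  constructor
  · rintro ⟨z, hz⟩
    induction z using Filter.Germ.inductionOn with | h z =>
    rw [hf, Filter.Germ.coe_eq] at hz
    exact hz.mono fun i hi => hi ▸ Rat.den_intCast (z i)
  · intro hx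
    refine ⟨↑(fun i => (x i).num), ?_⟩
    rw [hf, Filter.Germ.coe_eq]
    exact hx.mono fun i hi => Rat.coe_int_num_of_den_eq_one hi

theorem zero_le_nsValQ_coe_iff {I : Type*} {U : Ultrafilter I} (p : I → ℤ) (x : I → ℚ) :
    0 ≤ nsValQ (U := U) ↑p ↑x ↔ ∀ᶠ i in ↑U, 0 ≤ padicValRat (p i).natAbs (x i) :=
  Filter.Germ.coe_le

/-- `*ℤ` is the intersection of the valuation rings `O_p ⊆ *ℚ` of the `p`-adic valuations
`v_p`, where `p` ranges over the primes of `*ℤ`: an element `x ∈ *ℚ` lies in (the image of)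
`*ℤ` under the componentwise embedding `f` if and only if for every prime `p` of `*ℤ`,
either `x = 0` or `v_p(x) ≥ 0`. -/
theorem ultrapower_int_eq_inter_valuation_rings {I : Type*} (U : Ultrafilter I)
    (f : (↑U : Filter I).Germ ℤ →+* (↑U : Filter I).Germ ℚ)
    (hf : ∀ x : I → ℤ, f ↑x = ↑(fun i => ((x i : ℚ))))
    (x : (↑U : Filter I).Germ ℚ) :
    (∃ z : (↑U : Filter I).Germ ℤ, f z = x) ↔
      (∀ p : I → ℤ, {i : I | 0 < p i ∧ Prime (p i)} ∈ U →
        x = 0 ∨ 0 ≤ nsValQ (↑p) x) := by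
  induction x using Filter.Germ.inductionOn with | h x =>
  rw [Filter.Germ.exists_eq_coe_iff_eventually_den_eq_one hf]
  refine ⟨fun hx p _ => .inr ?_, fun h => ?_⟩
  · exact (zero_le_nsValQ_coe_iff p x).2 (hx.mono fun i => padicValRat_nonneg_of_den_eq_one)
  by_contra hx
  have hden : ∀ᶠ i in ↑U, (x i).den ≠ 1 := Ultrafilter.eventually_not.2 hx
  let p : I → ℤ := fun i => (x i).den.minFac
  have hp : {i | 0 < p i ∧ Prime (p i)} ∈ U := hden.mono fun i hi =>
    have hprime := Nat.minFac_prime hi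
    ⟨Int.natCast_pos.2 hprime.pos, Nat.prime_iff_prime_int.1 hprime⟩
  obtain hx0 | hval := h p hp
  · exact hx (Filter.Germ.coe_eq.1 hx0 |>.mono fun i hi => by simp [hi])
  obtain ⟨i, hi, hvi⟩ := (hden.and ((zero_le_nsValQ_coe_iff p x).1 hval)).exists
  have := Fact.mk (Nat.minFac_prime hi)
  exact (padicValRat_neg_of_dvd_den (Nat.minFac_dvd _)).not_ge hvi
end

section
/- Let U be a nonprincipal ultrafilter on a countably infinite I, *ℤ = ∏_U ℤ. For a proper ideal J of *ℤ, define F(J) = {pr(n) : n ∈ J}, where pr(n) = {p prime of *ℤ : p ∣ n} is the prime factor set of n. Then F(J) is a filter on the collection pr(*ℤ) of prime factor sets: ∅ ∉ F(J); F(J) is closed under intersection; and if pr(n) ∈ F(J), pr(n) ⊆ pr(m), then pr(m) ∈ F(J). -/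
open Filter

/-- `p` is a prime of the ultrapower `*ℤ = ∏_U ℤ` if `p > 0`, `p ≠ 1`, and the only
divisors of `p` in `*ℤ` are `±1` and `±p`. -/
def IsNSPrime {I : Type*} {U : Ultrafilter I} (p : (↑U : Filter I).Germ ℤ) : Prop :=
  0 < p ∧ p ≠ 1 ∧ ∀ y : (↑U : Filter I).Germ ℤ, y ∣ p → y = 1 ∨ y = -1 ∨ y = p ∨ y = -p

/-- The prime factor set `pr(n)` of `n ∈ *ℤ`: the set of primes of `*ℤ` dividing `n`. -/
def primeFactor {I : Type*} {U : Ultrafilter I} (n : (↑U : Filter I).Germ ℤ) :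
    Set ((↑U : Filter I).Germ ℤ) :=
  {p | IsNSPrime p ∧ p ∣ n}

/-!
Everything in `*ℤ` is decided componentwise, `U`-often. Thus the primes of `*ℤ` are the germs
that are `U`-often positive primes of `ℤ`, so they satisfy Euclid's lemma and
`pr(nm) = pr(n) ∪ pr(m)`, which gives upward closure. Componentwise gcds and Bézout
coefficients make `*ℤ` a Bézout ring, so `pr(n) ∩ pr(m) = pr(gcd(n, m))` with `gcd(n, m)` in the
ideal spanned by `n` and `m`. Finally, a non-unit is `U`-often different from `±1`, so the germ of
its least prime factors is a prime of `*ℤ` dividing it, and `∅ ∉ F(J)`.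
-/

namespace Filter.Germ

variable {α R : Type*} {l : Filter α}

theorem coe_dvd_coe_iff [Monoid R] {f g : α → R} :
    (f : l.Germ R) ∣ g ↔ ∀ᶠ i in l, f i ∣ g i := by
  classical
  constructor
  · rintro ⟨c, hc⟩
    induction c using Filter.Germ.inductionOn with | h c => ?_
    filter_upwards [coe_eq.1 hc] with i hi using ⟨c i, hi⟩
  · intro h
    refine ⟨↑(fun i => if hi : f i ∣ g i then hi.choose else 1), coe_eq.2 ?_⟩
    filter_upwards [h] with i hi
    show g i = f i * _
    rw [dif_pos hi]
    exact hi.choose_spec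

instance isBezout [CommRing R] [IsBezout R] : IsBezout (l.Germ R) := by
  refine IsBezout.iff_span_pair_isPrincipal.2 fun x y => ?_
  induction x using Filter.Germ.inductionOn with | h f => ?_
  induction y using Filter.Germ.inductionOn with | h g => ?_
  choose a b hab using fun i => IsBezout.gcd_eq_sum (f i) (g i)
  refine ⟨⟨↑(fun i => IsBezout.gcd (f i) (g i)), le_antisymm ?_ ?_⟩⟩
  · rw [Ideal.span_insert, sup_le_iff, Ideal.span_singleton_le_span_singleton,
      Ideal.span_singleton_le_span_singleton]
    exact ⟨coe_dvd_coe_iff.2 (.of_forall fun i => IsBezout.gcd_dvd_left _ _),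
      coe_dvd_coe_iff.2 (.of_forall fun i => IsBezout.gcd_dvd_right _ _)⟩
  · rw [Submodule.span_le, Set.singleton_subset_iff, SetLike.mem_coe, Ideal.mem_span_pair]
    exact ⟨↑a, ↑b, coe_eq.2 (.of_forall hab)⟩

end Filter.Germ

theorem Int.minFac_natAbs_pos_and_prime {n : ℤ} (hn : n.natAbs ≠ 1) :
    0 < (n.natAbs.minFac : ℤ) ∧ Prime (n.natAbs.minFac : ℤ) :=
  have hmin := Nat.minFac_prime hn
  ⟨Int.natCast_pos.2 hmin.pos, Nat.prime_iff_prime_int.1 hmin⟩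

section Ultrapower

variable {I : Type*} {U : Ultrafilter I}

theorem isNSPrime_coe_of_eventually {f : I → ℤ} (h : ∀ᶠ i in ↑U, 0 < f i ∧ Prime (f i)) :
    IsNSPrime (f : (U : Filter I).Germ ℤ) := by
  refine ⟨Germ.coe_pos.2 (h.mono fun i hi => hi.1), fun h1 => ?_, fun y hy => ?_⟩
  · obtain ⟨i, ⟨-, hi⟩, h1i⟩ := (h.and (Germ.coe_eq.1 h1)).exists
    exact hi.not_isUnit (h1i ▸ isUnit_one)
  · induction y using Germ.inductionOn with | h q => ?_
    have hq : ∀ᶠ i in ↑U, q i = 1 ∨ q i = -1 ∨ q i = f i ∨ q i = -f i := by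
      filter_upwards [h, Germ.coe_dvd_coe_iff.1 hy] with i hfi hqi
      rcases hfi.2.irreducible.dvd_iff.1 hqi with hu | ha
      · exact (Int.isUnit_iff.1 hu).elim .inl (.inr ∘ .inl)
      · exact (Int.associated_iff.1 ha.symm).elim
          (.inr ∘ .inr ∘ .inl) (.inr ∘ .inr ∘ .inr)
    simp only [Ultrafilter.eventually_or] at hq
    rcases hq with hq | hq | hq | hq
    exacts [.inl (Germ.coe_eq.2 hq), .inr (.inl (Germ.coe_eq.2 hq)),
      .inr (.inr (.inl (Germ.coe_eq.2 hq))), .inr (.inr (.inr (Germ.coe_eq.2 hq)))]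

theorem isNSPrime_coe_iff {f : I → ℤ} :
    IsNSPrime (f : (U : Filter I).Germ ℤ) ↔ ∀ᶠ i in ↑U, 0 < f i ∧ Prime (f i) := by
  refine ⟨fun hf => ?_, isNSPrime_coe_of_eventually⟩
  obtain ⟨hpos, hne1, hdvd⟩ := hf
  have hpos' : ∀ᶠ i in ↑U, 0 < f i := Germ.coe_pos.1 hpos
  have hne1' : ∀ᶠ i in ↑U, f i ≠ 1 :=
    Ultrafilter.eventually_not.2 fun h => hne1 (Germ.coe_eq.2 h)
  -- the germ `q` of least prime factors is a prime of `*ℤ` dividing `f`, so it can only be `f`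
  set q : I → ℤ := fun i => ((f i).natAbs.minFac : ℤ)
  have hq : ∀ᶠ i in ↑U, 0 < q i ∧ Prime (q i) := by
    filter_upwards [hpos', hne1'] with i h0 h1
    exact Int.minFac_natAbs_pos_and_prime (by omega)
  have hqf : (q : (U : Filter I).Germ ℤ) ∣ f :=
    Germ.coe_dvd_coe_iff.2 (.of_forall fun i => Int.natCast_dvd.2 (Nat.minFac_dvd _))
  obtain ⟨hqpos, hq1, -⟩ := isNSPrime_coe_of_eventually hq
  rcases hdvd _ hqf with h | h | h | h
  · exact absurd h hq1
  · exact absurd (h ▸ hqpos) (by norm_num)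
  · filter_upwards [Germ.coe_eq.1 h, hq] with i hi hqi
    exact hi ▸ hqi
  · exact absurd (h ▸ hqpos) (not_lt.2 (neg_nonpos.2 hpos.le))

theorem IsNSPrime.dvd_or_dvd {p n m : (U : Filter I).Germ ℤ} (hp : IsNSPrime p)
    (h : p ∣ n * m) : p ∣ n ∨ p ∣ m := by
  induction p using Germ.inductionOn with | h q => ?_
  induction n using Germ.inductionOn with | h f => ?_
  induction m using Germ.inductionOn with | h g => ?_
  rw [← Germ.coe_mul, Germ.coe_dvd_coe_iff] at h
  have hdvd : ∀ᶠ i in ↑U, q i ∣ f i ∨ q i ∣ g i := by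
    filter_upwards [h, isNSPrime_coe_iff.1 hp] with i hi hqi
    exact hqi.2.dvd_or_dvd hi
  exact (Ultrafilter.eventually_or.1 hdvd).imp Germ.coe_dvd_coe_iff.2 Germ.coe_dvd_coe_iff.2

theorem primeFactor_mul (n m : (U : Filter I).Germ ℤ) :
    primeFactor (n * m) = primeFactor n ∪ primeFactor m := by
  ext p
  constructor
  · rintro ⟨hp, h⟩
    exact (hp.dvd_or_dvd h).imp (⟨hp, ·⟩) (⟨hp, ·⟩)
  · rintro (⟨hp, h⟩ | ⟨hp, h⟩)
    exacts [⟨hp, h.mul_right m⟩, ⟨hp, h.mul_left n⟩]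

theorem primeFactor_gcd (n m : (U : Filter I).Germ ℤ) :
    primeFactor (IsBezout.gcd n m) = primeFactor n ∩ primeFactor m := by
  ext p
  constructor
  · rintro ⟨hp, h⟩
    exact ⟨⟨hp, h.trans (IsBezout.gcd_dvd_left n m)⟩,
      ⟨hp, h.trans (IsBezout.gcd_dvd_right n m)⟩⟩
  · rintro ⟨⟨hp, hn⟩, -, hm⟩
    exact ⟨hp, IsBezout.dvd_gcd hn hm⟩

theorem primeFactor_nonempty {n : (U : Filter I).Germ ℤ} (hn : ¬IsUnit n) :
    (primeFactor n).Nonempty := by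
  induction n using Germ.inductionOn with | h f => ?_
  have hf : ∀ᶠ i in ↑U, (f i).natAbs ≠ 1 := by
    refine Ultrafilter.eventually_not.2 fun h => hn (.of_mul_eq_one (f : (U : Filter I).Germ ℤ) ?_)
    rw [← Germ.coe_mul, ← Germ.coe_one, Germ.coe_eq]
    filter_upwards [h] with i hi using Int.isUnit_mul_self (Int.isUnit_iff_natAbs_eq.2 hi)
  refine ⟨↑(fun i => ((f i).natAbs.minFac : ℤ)), isNSPrime_coe_of_eventually ?_,
    Germ.coe_dvd_coe_iff.2 (.of_forall fun i => Int.natCast_dvd.2 (Nat.minFac_dvd _))⟩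
  filter_upwards [hf] with i hi using Int.minFac_natAbs_pos_and_prime hi

end Ultrapower

theorem primeFactor_filter_of_ideal_general {I : Type*}
    (U : Ultrafilter I)
    (J : Ideal ((↑U : Filter I).Germ ℤ)) (hJ : J ≠ ⊤) :
    ∅ ∉ primeFactor '' (J : Set ((↑U : Filter I).Germ ℤ)) ∧
    (∀ S ∈ primeFactor '' (J : Set ((↑U : Filter I).Germ ℤ)),
      ∀ T ∈ primeFactor '' (J : Set ((↑U : Filter I).Germ ℤ)),
        S ∩ T ∈ primeFactor '' (J : Set ((↑U : Filter I).Germ ℤ))) ∧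
    (∀ S ∈ primeFactor '' (J : Set ((↑U : Filter I).Germ ℤ)),
      ∀ m : (↑U : Filter I).Germ ℤ, S ⊆ primeFactor m →
        primeFactor m ∈ primeFactor '' (J : Set ((↑U : Filter I).Germ ℤ))) := by
  refine ⟨?_, ?_, ?_⟩
  · rintro ⟨n, hn, hempty⟩
    exact (primeFactor_nonempty fun hu => hJ (J.eq_top_of_isUnit_mem hn hu)).ne_empty hempty
  · rintro _ ⟨n, hn, rfl⟩ _ ⟨m, hm, rfl⟩
    obtain ⟨a, b, hab⟩ := IsBezout.gcd_eq_sum n m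
    exact ⟨_, hab ▸ J.add_mem (J.mul_mem_left a hn) (J.mul_mem_left b hm), primeFactor_gcd n m⟩
  · rintro _ ⟨n, hn, rfl⟩ m hsub
    exact ⟨n * m, J.mul_mem_right m hn, by rw [primeFactor_mul, Set.union_eq_right.2 hsub]⟩

/-- For a proper ideal `J` of `*ℤ` (with `U` a nonprincipal ultrafilter on a countably
infinite set), the family `F(J) = {pr(n) : n ∈ J}` of prime factor sets of elements of `J`
is a filter on the collection of prime factor sets: it does not contain `∅`, it is closed
under intersections, and it is upward closed among prime factor sets. -/
theorem primeFactor_filter_of_ideal {I : Type*} [Countable I] [Infinite I]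
    (U : Ultrafilter I) (hU : ∀ i : I, U ≠ pure i)
    (J : Ideal ((↑U : Filter I).Germ ℤ)) (hJ : J ≠ ⊤) :
    ∅ ∉ primeFactor '' (J : Set ((↑U : Filter I).Germ ℤ)) ∧
    (∀ S ∈ primeFactor '' (J : Set ((↑U : Filter I).Germ ℤ)),
      ∀ T ∈ primeFactor '' (J : Set ((↑U : Filter I).Germ ℤ)),
        S ∩ T ∈ primeFactor '' (J : Set ((↑U : Filter I).Germ ℤ))) ∧
    (∀ S ∈ primeFactor '' (J : Set ((↑U : Filter I).Germ ℤ)),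
      ∀ m : (↑U : Filter I).Germ ℤ, S ⊆ primeFactor m →
        primeFactor m ∈ primeFactor '' (J : Set ((↑U : Filter I).Germ ℤ))) :=
  primeFactor_filter_of_ideal_general U J hJ
end

section
/- Let S be a totally ordered commutative semigroup (written additively) in which multiples are unique (n·x = n·y implies x = y for n > 0), and let T ⊆ S be a subsemigroup that is upward closed without right-end-point (x ∈ T, x ≤ y ⟹ y ∈ T). Then T is radical (n·x ∈ T ⟹ x ∈ T for n > 0) if and only if T is prime (a + b ∈ T ⟹ a ∈ T or b ∈ T). -/
/-!
A prime set is radical because `(n+1)·x = x + n·x`. Conversely, if `a + b ∈ T` with `a ≤ b`,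
then `a + b ≤ b + b = 2·b`, so `2·b ∈ T` by upward closure and `b ∈ T` by radicality.
-/

/-- `pmul n x` is the `(n+1)`-fold sum `x + x + ⋯ + x` in an additive semigroup, so that
positive multiples are `pmul 0 x = x`, `pmul 1 x = x + x`, etc. -/
def pmul {S : Type*} [AddCommSemigroup S] (n : ℕ) (x : S) : S :=
  Nat.rec x (fun _ ih => x + ih) n

section

variable {S : Type*}

theorem mem_of_pmul_mem_of_prime [AddCommSemigroup S] {T : Set S}
    (hprime : ∀ a b : S, a + b ∈ T → a ∈ T ∨ b ∈ T) :
    ∀ (n : ℕ) {x : S}, pmul n x ∈ T → x ∈ T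
  | 0, _, hx => hx
  | n + 1, x, hx => (hprime x (pmul n x) hx).elim id (mem_of_pmul_mem_of_prime hprime n)

theorem mem_or_mem_of_add_mem_of_add_self_mem [AddCommSemigroup S] [LinearOrder S]
    (hmono : ∀ z : S, Monotone (z + ·)) {T : Set S} (hT : IsUpperSet T)
    (hhalf : ∀ x : S, x + x ∈ T → x ∈ T) {a b : S} (hab : a + b ∈ T) : a ∈ T ∨ b ∈ T := by
  wlog hle : a ≤ b generalizing a b
  · rw [add_comm] at hab
    exact (this hab (le_of_not_ge hle)).symm
  have hbb : a + b ≤ b + b := by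
    rw [add_comm a b]
    exact hmono b hle
  exact Or.inr (hhalf b (hT hbb hab))

end

theorem radical_iff_prime_subsemigroup_general {S : Type*} [AddCommSemigroup S] [LinearOrder S]
    (hcov : ∀ x y z : S, x < y → z + x < z + y)
    (T : Set S)
    (hTup : ∀ x ∈ T, ∀ y : S, x ≤ y → y ∈ T) :
    (∀ (n : ℕ) (x : S), pmul n x ∈ T → x ∈ T) ↔
      (∀ a b : S, a + b ∈ T → a ∈ T ∨ b ∈ T) := by
  have hmono : ∀ z : S, Monotone (z + ·) := fun z =>
    StrictMono.monotone fun x y hxy => hcov x y z hxy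
  have hT : IsUpperSet T := fun x y hxy hx => hTup x hx y hxy
  refine ⟨fun hrad a b hab => ?_, fun hprime n x => mem_of_pmul_mem_of_prime hprime n⟩
  exact mem_or_mem_of_add_mem_of_add_self_mem hmono hT (hrad 1) hab

/-- Let `S` be a totally ordered commutative semigroup in which positive multiples are
unique and the order is compatible with addition, all elements being nonnegative in the
sense `a ≤ a + b`. Let `T ⊆ S` be a subsemigroup that is upward closed (hence without
right-end-point). Then `T` is radical (`n·x ∈ T → x ∈ T` for `n > 0`) if and only if `T`
is prime (`a + b ∈ T → a ∈ T ∨ b ∈ T`). -/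
theorem radical_iff_prime_subsemigroup {S : Type*} [AddCommSemigroup S] [LinearOrder S]
    (hcov : ∀ x y z : S, x < y → z + x < z + y)
    (hpos : ∀ a b : S, a ≤ a + b)
    (huniq : ∀ (n : ℕ) (x y : S), pmul n x = pmul n y → x = y)
    (T : Set S)
    (hTadd : ∀ x ∈ T, ∀ y ∈ T, x + y ∈ T)
    (hTup : ∀ x ∈ T, ∀ y : S, x ≤ y → y ∈ T) :
    (∀ (n : ℕ) (x : S), pmul n x ∈ T → x ∈ T) ↔
      (∀ a b : S, a + b ∈ T → a ∈ T ∨ b ∈ T) :=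
  radical_iff_prime_subsemigroup_general hcov T hTup
end
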